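/- Let B = [[B₁₁, B₁₂],[B₂₁, B₂₂]] be an n×n Hermitian positive definite matrix where B₂₂ is a k×k principal block. Then B₂₁ B₁₁⁻¹ B₁₂ ≤ ((1 − κ(B))/(1 + κ(B)))² B₂₂ in the Loewner order, where κ(B) is the spectral condition number of B. -/

import Mathlib

open Matrix Complex
open scoped ComplexOrder

noncomputable def condNum {m : Type*} [Fintype m] [DecidableEq m]
    {M : Matrix m m ℂ} (hM : M.IsHermitian) : ℝ :=
  (⨆ i, hM.eigenvalues i) / (⨅ i, hM.eigenvalues i)

/-!
If `a • 1 ≤ M ≤ b • 1` for `M = [[A, B], [Bᴴ, D]]`, conjugating by `diag(1, -1)` shows that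
`M' = [[A, -B], [-Bᴴ, D]]` obeys the same bounds, so `a • M ≤ a b • 1 ≤ b • M'`. Up to the factor
`b - a`, the matrix `b • M' - a • M` is `[[A, -t • B], [-t • Bᴴ, D]]` with `t = (b + a) / (b - a)`,
and by the Schur complement its positivity says `t ^ 2 • Bᴴ A⁻¹ B ≤ D`. For `M` positive definite
the best bounds are `a = λ_min`, `b = λ_max`, and `t⁻¹ = (κ - 1) / (κ + 1)`.
-/

open scoped MatrixOrder

namespace Matrix

variable {𝕜 : Type*} [RCLike 𝕜]

section Eigenvalues

variable {n : Type*} [Fintype n] [DecidableEq n] {A : Matrix n n 𝕜}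

theorem IsHermitian.iInf_eigenvalues_smul_one_le (hA : A.IsHermitian) :
    (⨅ i, hA.eigenvalues i) • (1 : Matrix n n 𝕜) ≤ A := by
  rw [← Algebra.algebraMap_eq_smul_one, algebraMap_le_iff_le_spectrum hA.isSelfAdjoint,
    hA.spectrum_real_eq_range_eigenvalues]
  rintro _ ⟨i, rfl⟩
  exact ciInf_le (Set.finite_range _).bddBelow i

theorem IsHermitian.le_iSup_eigenvalues_smul_one (hA : A.IsHermitian) :
    A ≤ (⨆ i, hA.eigenvalues i) • (1 : Matrix n n 𝕜) := by
  rw [← Algebra.algebraMap_eq_smul_one, le_algebraMap_iff_spectrum_le hA.isSelfAdjoint,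
    hA.spectrum_real_eq_range_eigenvalues]
  rintro _ ⟨i, rfl⟩
  exact le_ciSup (Set.finite_range _).bddAbove i

theorem PosDef.iInf_eigenvalues_pos [Nonempty n] (hA : A.PosDef) :
    0 < ⨅ i, hA.isHermitian.eigenvalues i := by
  obtain ⟨i, hi⟩ := exists_eq_ciInf_of_finite (f := hA.isHermitian.eigenvalues)
  exact hi ▸ hA.eigenvalues_pos i

end Eigenvalues

variable {p q : Type*} [DecidableEq p] [DecidableEq q]
variable {A : Matrix p p 𝕜} {B : Matrix p q 𝕜} {C : Matrix q p 𝕜} {D : Matrix q q 𝕜}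

theorem smul_one_le_of_smul_one_le_fromBlocks {r : ℝ} (h : r • 1 ≤ fromBlocks A B C D) :
    r • 1 ≤ A := by
  rw [le_iff]
  convert (le_iff.mp h).submatrix Sum.inl using 1
  ext i j
  simp [one_apply]

variable [Fintype p] [Fintype q]

theorem smul_one_le_fromBlocks_neg {r : ℝ} (h : r • 1 ≤ fromBlocks A B C D) :
    r • 1 ≤ fromBlocks A (-B) (-C) D := by
  have := star_left_conjugate_le_conjugate h (fromBlocks 1 0 0 (-1))
  simpa [star_eq_conjTranspose, fromBlocks_conjTranspose, fromBlocks_multiply] using this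

theorem smul_fromBlocks_le_smul_fromBlocks_neg {a b : ℝ} (ha : 0 ≤ a) (hab : a ≤ b)
    (hlo : a • 1 ≤ fromBlocks A B C D) (hhi : fromBlocks A B C D ≤ b • 1) :
    a • fromBlocks A B C D ≤ b • fromBlocks A (-B) (-C) D :=
  calc a • fromBlocks A B C D ≤ a • b • (1 : Matrix (p ⊕ q) (p ⊕ q) 𝕜) :=
        smul_le_smul_of_nonneg_left hhi ha
    _ = b • a • 1 := smul_comm a b _
    _ ≤ b • fromBlocks A (-B) (-C) D :=
        smul_le_smul_of_nonneg_left (smul_one_le_fromBlocks_neg hlo) (ha.trans hab)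

theorem fromBlocks_neg_smul_nonneg {a b : ℝ} (ha : 0 ≤ a) (hab : a < b)
    (hlo : a • 1 ≤ fromBlocks A B C D) (hhi : fromBlocks A B C D ≤ b • 1) :
    0 ≤ fromBlocks A (-((b + a) / (b - a)) • B) (-((b + a) / (b - a)) • C) D := by
  have hba : 0 < b - a := sub_pos.mpr hab
  have hdiff : b • fromBlocks A (-B) (-C) D - a • fromBlocks A B C D =
      (b - a) • fromBlocks A (-((b + a) / (b - a)) • B) (-((b + a) / (b - a)) • C) D := by
    have ht : (b - a) * -((b + a) / (b - a)) = -(b + a) := by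
      rw [mul_neg, mul_div_cancel₀ _ hba.ne']
    rw [sub_eq_add_neg (b • _)]
    simp only [fromBlocks_smul, fromBlocks_neg, fromBlocks_add]
    congr 1
    · module
    · linear_combination (norm := module) ht.symm • B
    · linear_combination (norm := module) ht.symm • C
    · module
  have := sub_nonneg.mpr (smul_fromBlocks_le_smul_fromBlocks_neg ha hab.le hlo hhi)
  rw [hdiff] at this
  simpa [inv_smul_smul₀ hba.ne'] using smul_nonneg (inv_nonneg.mpr hba.le) this

theorem conjTranspose_mul_inv_mul_le_of_bounds {a b : ℝ} (ha : 0 < a)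
    (hlo : a • 1 ≤ fromBlocks A B Bᴴ D) (hhi : fromBlocks A B Bᴴ D ≤ b • 1) :
    Bᴴ * A⁻¹ * B ≤ ((b - a) / (b + a)) ^ 2 • D := by
  rcases le_or_gt b a with hba | hab
  · have hM : fromBlocks A B Bᴴ D = a • fromBlocks 1 0 0 1 := by
      rw [fromBlocks_one]
      exact le_antisymm (hhi.trans (smul_le_smul_of_nonneg_right hba zero_le_one)) hlo
    rw [fromBlocks_smul, smul_zero] at hM
    obtain ⟨-, rfl, -, rfl⟩ := fromBlocks_inj.mp hM
    simpa using smul_nonneg (sq_nonneg _) (smul_nonneg ha.le zero_le_one)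
  have hA : A.PosDef := by
    simpa using (PosDef.one.smul ha).add_posSemidef (smul_one_le_of_smul_one_le_fromBlocks hlo)
  let := hA.isUnit.invertible
  set t := (b + a) / (b - a)
  have ht : t ≠ 0 := (div_pos (add_pos (ha.trans hab) ha) (sub_pos.mpr hab)).ne'
  have hSchur : 0 ≤ D - t ^ 2 • (Bᴴ * A⁻¹ * B) := by
    have hK : 0 ≤ fromBlocks A ((-t) • B) ((-t) • B)ᴴ D := by
      simpa [conjTranspose_smul] using fromBlocks_neg_smul_nonneg ha.le hab hlo hhi
    rw [nonneg_iff_posSemidef, PosDef.fromBlocks₁₁ _ D hA] at hK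
    simpa only [conjTranspose_smul, star_trivial, Matrix.smul_mul, Matrix.mul_smul, smul_smul,
      ← sq, neg_sq, nonneg_iff_posSemidef] using hK
  rw [← sub_nonneg, ← inv_div, inv_pow]
  convert smul_nonneg (inv_nonneg.mpr (sq_nonneg t)) hSchur using 1
  rw [smul_sub, smul_smul, inv_mul_cancel₀ (pow_ne_zero 2 ht), one_smul]

end Matrix

theorem schur_block_bound_general {p q : Type*} [Fintype p] [DecidableEq p]
    [Fintype q] [DecidableEq q] [Nonempty p]
    (B11 : Matrix p p ℂ) (B12 : Matrix p q ℂ) (B21 : Matrix q p ℂ) (B22 : Matrix q q ℂ)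
    (hB : (Matrix.fromBlocks B11 B12 B21 B22).PosDef) :
    ((((1 - condNum hB.isHermitian) / (1 + condNum hB.isHermitian)) ^ 2 : ℂ) • B22
        - B21 * B11⁻¹ * B12).PosSemidef := by
  obtain ⟨-, hB12, -, -⟩ := isHermitian_fromBlocks_iff.mp hB.isHermitian
  subst hB12
  set a := ⨅ i, hB.isHermitian.eigenvalues i
  set b := ⨆ i, hB.isHermitian.eigenvalues i
  have ha : 0 < a := hB.iInf_eigenvalues_pos
  have hκ : (((1 - condNum hB.isHermitian) / (1 + condNum hB.isHermitian)) ^ 2 : ℂ) =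
      (((b - a) / (b + a)) ^ 2 : ℝ) := by
    have ha' : (a : ℂ) ≠ 0 := Complex.ofReal_ne_zero.mpr ha.ne'
    rw [show condNum hB.isHermitian = b / a from rfl]
    push_cast
    rw [one_sub_div ha', one_add_div ha', div_div_div_cancel_right₀ ha', ← neg_sub, neg_div,
      neg_sq, add_comm]
  rw [hκ, Complex.coe_smul, ← le_iff]
  exact conjTranspose_mul_inv_mul_le_of_bounds ha hB.isHermitian.iInf_eigenvalues_smul_one_le
    hB.isHermitian.le_iSup_eigenvalues_smul_one

/-- If `B = [[B₁₁, B₁₂], [B₂₁, B₂₂]]` is Hermitian positive definite, then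
`B₂₁ B₁₁⁻¹ B₁₂ ≤ ((1-κ(B))/(1+κ(B)))² B₂₂` in the Loewner order. -/
theorem schur_block_bound {p q : Type*} [Fintype p] [DecidableEq p]
    [Fintype q] [DecidableEq q] [Nonempty p] [Nonempty q]
    (B11 : Matrix p p ℂ) (B12 : Matrix p q ℂ) (B21 : Matrix q p ℂ) (B22 : Matrix q q ℂ)
    (hB : (Matrix.fromBlocks B11 B12 B21 B22).PosDef) :
    ((((1 - condNum hB.isHermitian) / (1 + condNum hB.isHermitian)) ^ 2 : ℂ) • B22
        - B21 * B11⁻¹ * B12).PosSemidef :=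
  schur_block_bound_general B11 B12 B21 B22 hB
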